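/- arXiv:2410.10057 — 4 statements merged into one kernel-verified Lean document; each statement's English description precedes it below -/
import Mathlib

section
/- For all real x > 0, exp(arcsinh(1/sinh x)) > 2/x. -/
/-! With `y = 1 / sinh x` one has `√(1 + y²) = coth x`, so `exp (arsinh y) = y + √(1 + y²)` equals
`(1 + cosh x) / sinh x = coth (x / 2)`. The claim `coth t > 1 / t` for `t = x / 2 > 0` is
`sinh t < t cosh t`, which holds because `t cosh t - sinh t` vanishes at `0` and has derivative
`t sinh t > 0`. -/

open Real

theorem Real.sinh_lt_mul_cosh {t : ℝ} (ht : 0 < t) : sinh t < t * cosh t := by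
  have hmono : StrictMonoOn (fun s : ℝ => s * cosh s - sinh s) (Set.Ici 0) := by
    refine strictMonoOn_of_deriv_pos (convex_Ici 0) (by fun_prop) fun s hs => ?_
    rw [interior_Ici] at hs
    have hderiv : HasDerivAt (fun s : ℝ => s * cosh s - sinh s)
        (1 * cosh s + s * sinh s - cosh s) s :=
      ((hasDerivAt_id s).mul (hasDerivAt_cosh s)).sub (hasDerivAt_sinh s)
    rw [hderiv.deriv]
    nlinarith [mul_pos (Set.mem_Ioi.1 hs) (sinh_pos_iff.2 hs)]
  simpa using hmono Set.self_mem_Ici ht.le ht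

theorem Real.one_add_cosh_div_sinh (x : ℝ) :
    (1 + cosh x) / sinh x = cosh (x / 2) / sinh (x / 2) := by
  obtain ⟨t, rfl⟩ : ∃ t, x = 2 * t := ⟨x / 2, by ring⟩
  rw [mul_div_cancel_left₀ t two_ne_zero, cosh_two_mul, sinh_two_mul, ← cosh_sq_sub_sinh_sq t]
  have hcosh : cosh t ≠ 0 := (cosh_pos t).ne'
  rcases eq_or_ne (sinh t) 0 with hsinh | hsinh
  · simp [hsinh]
  field_simp
  ring

theorem Real.exp_arsinh_inv_sinh {x : ℝ} (hx : 0 < x) :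
    exp (arsinh (1 / sinh x)) = (1 + cosh x) / sinh x := by
  have hsinh : 0 < sinh x := sinh_pos_iff.2 hx
  have hsqrt : √(1 + (1 / sinh x) ^ 2) = cosh x / sinh x := by
    rw [← sqrt_sq (div_pos (cosh_pos x) hsinh).le, div_pow (cosh x), cosh_sq']
    field_simp
    ring_nf
  rw [exp_arsinh, hsqrt, add_div]

theorem exp_arsinh_inv_sinh_gt (x : ℝ) (hx : 0 < x) :
    Real.exp (Real.arsinh (1 / Real.sinh x)) > 2 / x := by
  have ht : 0 < x / 2 := half_pos hx
  rw [exp_arsinh_inv_sinh hx, one_add_cosh_div_sinh, gt_iff_lt,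
    show 2 / x = 1 / (x / 2) by field_simp, div_lt_div_iff₀ ht (sinh_pos_iff.2 ht), one_mul]
  exact (sinh_lt_mul_cosh ht).trans_eq (mul_comm _ _)
end

section
/- There exists x0 > 0 such that for all real x with 0 < x < x0, exp(-arcsinh(1/sinh x)) / sinh(x/2) > 1/(1+x). -/
set_option maxHeartbeats 1000000 in
theorem exp_neg_arsinh_div_sinh_gt :
    ∃ x0 : ℝ, 0 < x0 ∧ ∀ x : ℝ, 0 < x → x < x0 →
      Real.exp (-(Real.arsinh (1 / Real.sinh x))) / Real.sinh (x / 2) > 1 / (1 + x) := by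
  refine ⟨1, one_pos, fun x hx hx1 => ?_⟩
  have hs : 0 < Real.sinh x := Real.sinh_pos_iff.2 hx
  have hs2 : 0 < Real.sinh (x / 2) := Real.sinh_pos_iff.2 (by linarith)
  have hc : 0 < Real.cosh x := Real.cosh_pos x
  have hc2 : 0 < Real.cosh (x / 2) := Real.cosh_pos _
  have hsqrt : Real.sqrt (1 + (1 / Real.sinh x) ^ 2) = Real.cosh x / Real.sinh x := by
    rw [show 1 + (1 / Real.sinh x) ^ 2 = (Real.cosh x / Real.sinh x) ^ 2 by
      field_simp
      nlinarith [Real.cosh_sq x]]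
    exact Real.sqrt_sq (by positivity)
  have hexp : Real.exp (Real.arsinh (1 / Real.sinh x)) = (1 + Real.cosh x) / Real.sinh x := by
    rw [Real.exp_arsinh, hsqrt]
    field_simp
  have hkey : Real.exp (-(Real.arsinh (1 / Real.sinh x))) = Real.sinh x / (1 + Real.cosh x) := by
    rw [Real.exp_neg, hexp, inv_div]
  have h1 : Real.sinh x = 2 * Real.sinh (x / 2) * Real.cosh (x / 2) := by
    have := Real.sinh_two_mul (x / 2)
    rw [show 2 * (x / 2) = x by ring] at this
    linarith
  have h2 : 1 + Real.cosh x = 2 * Real.cosh (x / 2) ^ 2 := by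
    have := Real.cosh_two_mul (x / 2)
    rw [show 2 * (x / 2) = x by ring] at this
    nlinarith [Real.cosh_sq (x / 2)]
  have hLHS : Real.exp (-(Real.arsinh (1 / Real.sinh x))) / Real.sinh (x / 2)
      = 1 / Real.cosh (x / 2) := by
    rw [hkey, h1, h2]
    field_simp
  rw [hLHS]
  -- reduce to cosh (x/2) < 1 + x
  have hbound : Real.cosh (x / 2) < 1 + x := by
    set t := x / 2 with ht
    have ht0 : 0 < t := by positivity
    have ht1 : t < 1 / 2 := by rw [ht]; linarith
    have hgoal : 1 + x = 1 + 2 * t := by rw [ht]; ring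
    rw [hgoal]
    clear_value t
    have hprod : Real.exp t * Real.exp (-t) = 1 := by
      rw [← Real.exp_add]; simp
    have h3 : 1 + t < Real.exp t := by
      have := Real.add_one_lt_exp (ne_of_gt ht0); linarith
    have h4 : 1 - t < Real.exp (-t) := by
      have := Real.add_one_lt_exp (x := -t) (by intro h; rw [neg_eq_zero] at h; exact ne_of_gt ht0 h)
      linarith
    have he1 : Real.exp t < 1 / (1 - t) := by
      rw [lt_div_iff₀ (by linarith)]
      nlinarith [Real.exp_pos t]
    have he2 : Real.exp (-t) < 1 / (1 + t) := by
      rw [lt_div_iff₀ (by linarith)]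
      nlinarith [Real.exp_pos (-t)]
    have hcosh : Real.cosh t = (Real.exp t + Real.exp (-t)) / 2 := Real.cosh_eq t
    have hsum : 1 / (1 - t) + 1 / (1 + t) = 2 * (1 / (1 - t ^ 2)) := by
      have hne1 : (1 - t) ≠ 0 := by intro h; nlinarith
      have hne2 : (1 + t) ≠ 0 := by intro h; nlinarith
      have hne3 : (1 - t ^ 2) ≠ 0 := by intro h; nlinarith
      field_simp
      ring
    have hA : Real.cosh t < 1 / (1 - t ^ 2) := by
      rw [hcosh]; linarith
    have hB : 1 / (1 - t ^ 2) < 1 + 2 * t := by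
      rw [div_lt_iff₀ (by nlinarith)]
      nlinarith
    linarith
  rw [gt_iff_lt, div_lt_div_iff₀ (by linarith) hc2]
  linarith
end

section
/- For every real x > 0, arcsinh(1/sinh x) > e^{-x}. -/
theorem arsinh_inv_sinh_gt_exp_neg (x : ℝ) (hx : 0 < x) :
    Real.arsinh (1 / Real.sinh x) > Real.exp (-x) := by
  have hs : 0 < Real.sinh x := Real.sinh_pos_iff.2 hx
  have hc1 : 1 < Real.cosh x := Real.one_lt_cosh.2 (ne_of_gt hx)
  set y : ℝ := 1 / Real.sinh x with hy_def
  have hy : 0 < y := by positivity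
  -- √(1 + y²) = cosh x / sinh x
  have hsq : Real.sqrt (1 + y ^ 2) = Real.cosh x / Real.sinh x := by
    rw [show (1 : ℝ) + y ^ 2 = (Real.cosh x / Real.sinh x) ^ 2 by
      rw [hy_def]
      field_simp [hs.ne']
      nlinarith [Real.cosh_sq_sub_sinh_sq x]]
    exact Real.sqrt_sq (by positivity)
  set u : ℝ := (Real.cosh x - 1) / Real.sinh x with hu_def
  have hu0 : 0 < u := div_pos (by linarith) hs
  -- exp (arsinh y) * u = 1
  have hexp : Real.exp (Real.arsinh y) = y + Real.sqrt (1 + y ^ 2) :=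
    Real.exp_arsinh y
  have hprod : Real.exp (Real.arsinh y) * u = 1 := by
    rw [hexp, hsq, hu_def, hy_def]
    field_simp
    nlinarith [Real.cosh_sq_sub_sinh_sq x]
  have hlog : Real.log u = -Real.arsinh y := by
    have : u = Real.exp (-Real.arsinh y) := by
      rw [Real.exp_neg]
      field_simp at hprod ⊢
      linarith [hprod]
    rw [this, Real.log_exp]
  -- u < 1
  have hu1 : u < 1 := by
    rw [hu_def, div_lt_one hs]
    have h1 : Real.exp (-x) < 1 := Real.exp_lt_one_iff.2 (by linarith)
    rw [Real.cosh_eq, Real.sinh_eq]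
    linarith
  have hlt : Real.log u < u - 1 := Real.log_lt_sub_one_of_pos hu0 (ne_of_lt hu1)
  rw [hlog] at hlt
  -- so arsinh y > 1 - u; now show 1 - u > exp (-x)
  have key : Real.exp (-x) < 1 - u := by
    rw [hu_def, Real.cosh_eq, Real.sinh_eq]
    have he : Real.exp (-x) * Real.exp x = 1 := by
      rw [← Real.exp_add]; simp
    have h1 : Real.exp (-x) < 1 := Real.exp_lt_one_iff.2 (by linarith)
    have h2 : 0 < Real.exp (-x) := Real.exp_pos _
    have hd : (0:ℝ) < Real.exp x - Real.exp (-x) := by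
      rw [Real.sinh_eq] at hs; linarith
    rw [lt_sub_iff_add_lt]
    field_simp
    nlinarith [sq_nonneg (1 - Real.exp (-x)), he, mul_pos (sub_pos.2 h1) (sub_pos.2 h1)]
  linarith
end

section
/- Let (ℓ_n) be any non-decreasing sequence of positive reals. Then there exists a non-decreasing sequence (ℓ'_n) with ℓ'_n ≥ ℓ_n for all n, and a strictly increasing sequence of indices (n_k), such that the alternating sums σ_k = ∑_{j=1}^k (-1)^{k-j} ℓ'_{n_j} satisfy ∑_{k≥1} exp(-σ_k/2) = ∞. -/
theorem exists_larger_lengths_parabolic (ℓ : ℕ → ℝ) (hpos : ∀ n, 0 < ℓ n)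
    (hmono : Monotone ℓ) :
    ∃ ℓ' : ℕ → ℝ, Monotone ℓ' ∧ (∀ n, ℓ n ≤ ℓ' n) ∧
      ∃ n : ℕ → ℕ, StrictMono n ∧
        ¬ Summable (fun k : ℕ =>
          Real.exp (-(∑ j ∈ Finset.Icc 1 k, (-1 : ℝ) ^ (k - j) * ℓ' (n j)) / 2)) := by
  set ℓ' : ℕ → ℝ := fun n => ℓ (2 * ((n + 1) / 2)) with hℓ'
  have key : ∀ m : ℕ,
      (∑ j ∈ Finset.Icc 1 (2 * m), (-1 : ℝ) ^ (2 * m - j) * ℓ' j) = 0 := by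
    intro m
    induction m with
    | zero => simp
    | succ m ih =>
      have h2 : 2 * (m + 1) = (2 * m + 1) + 1 := by ring
      rw [h2, Finset.sum_Icc_succ_top (by omega), Finset.sum_Icc_succ_top (by omega)]
      have hrw : ∀ j ∈ Finset.Icc 1 (2 * m),
          (-1 : ℝ) ^ (2 * m + 1 + 1 - j) * ℓ' j = (-1 : ℝ) ^ (2 * m - j) * ℓ' j := by
        intro j hj
        simp only [Finset.mem_Icc] at hj
        have : 2 * m + 1 + 1 - j = (2 * m - j) + 2 := by omega
        rw [this, pow_add]
        ring_nf
      rw [Finset.sum_congr rfl hrw, ih]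
      have e1 : ℓ' (2 * m + 1) = ℓ (2 * (m + 1)) := by
        simp only [hℓ']
        congr 1
        omega
      have e2 : ℓ' (2 * m + 1 + 1) = ℓ (2 * (m + 1)) := by
        simp only [hℓ']
        congr 1
        omega
      have p1 : (-1 : ℝ) ^ (2 * m + 1 + 1 - (2 * m + 1)) = -1 := by
        norm_num
      have p2 : (-1 : ℝ) ^ (2 * m + 1 + 1 - (2 * m + 1 + 1)) = 1 := by
        norm_num
      rw [e1, e2, p1, p2]
      ring
  refine ⟨ℓ', ?_, ?_, id, strictMono_id, ?_⟩
  · intro a b hab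
    exact hmono (by omega)
  · intro n
    exact hmono (by omega)
  · intro hsum
    have h0 := hsum.tendsto_atTop_zero
    have hsub : Filter.Tendsto (fun m : ℕ =>
        Real.exp (-(∑ j ∈ Finset.Icc 1 (2 * m), (-1 : ℝ) ^ (2 * m - j) * ℓ' (id j)) / 2))
        Filter.atTop (nhds 0) :=
      h0.comp (Filter.tendsto_atTop_atTop.2 fun b => ⟨b, fun a ha => by omega⟩)
    have heq : (fun m : ℕ =>
        Real.exp (-(∑ j ∈ Finset.Icc 1 (2 * m), (-1 : ℝ) ^ (2 * m - j) * ℓ' (id j)) / 2))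
        = fun _ => (1 : ℝ) := by
      funext m
      simp [key m]
    rw [heq] at hsub
    have := tendsto_nhds_unique hsub tendsto_const_nhds
    norm_num at this
end
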